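/- α_NL ≥ 1/(1 + P_lL). -/
import Mathlib


/-- α_NL: the changing point between Segment 2 and Segment 3. -/
noncomputable def alphaNL (PhH PlH PhL PlL : ℝ) : ℝ :=
  (2 * PhH * PlL ^ 2 + PhH * (PhH + 3 * PlL) - (3 * PhH + PlL) + 2
      - 2 * PhL * Real.sqrt (PhH * PhL * PlH * PlL)) /
    (2 * PlH ^ 2 + 8 * PhH * PlL ^ 2)

/-- α_NL ≥ 1/(1 + P_lL). -/
theorem stmt_14 (PhH PlH PhL PlL : ℝ)
    (hPhL : 0 < PhL) (hhh : PhL < PhH) (hHL : PhH ≤ PlL) (hPlL : PlL < 1)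
    (hsH : PhH + PlH = 1) (hsL : PhL + PlL = 1) :
    1 / (1 + PlL) ≤ alphaNL PhH PlH PhL PlL := by
  have h1 : PlH = 1 - PhH := by linarith
  have h2 : PhL = 1 - PlL := by linarith
  subst h1 h2
  set a := PhH with ha
  set b := PlL with hb
  have ha0 : 0 < a := by linarith
  have ha1 : a < 1 := by linarith
  have hb0 : 0 < b := by linarith
  have hb1 : b < 1 := by linarith
  have hx0 : (0:ℝ) ≤ a * (1 - a) := by nlinarith
  have hy0 : (0:ℝ) ≤ b * (1 - b) := by nlinarith
  have hsq : Real.sqrt (a * (1 - b) * (1 - a) * b) ≤ (a * (1 - a) + b * (1 - b)) / 2 := by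
    rw [show a * (1 - b) * (1 - a) * b = (a * (1 - a)) * (b * (1 - b)) by ring]
    calc Real.sqrt ((a * (1 - a)) * (b * (1 - b)))
        ≤ Real.sqrt (((a * (1 - a) + b * (1 - b)) / 2) ^ 2) := by
          apply Real.sqrt_le_sqrt
          nlinarith [sq_nonneg (a * (1 - a) - b * (1 - b))]
      _ = (a * (1 - a) + b * (1 - b)) / 2 := Real.sqrt_sq (by linarith)
  unfold alphaNL
  have hD : (0:ℝ) < 2 * (1 - a) ^ 2 + 8 * a * b ^ 2 := by nlinarith
  rw [div_le_div_iff₀ (by linarith) hD]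
  have key : b * (1 - b) * (a - b) ^ 2 ≥ 0 := by positivity
  nlinarith [mul_le_mul_of_nonneg_left hsq (by nlinarith : (0:ℝ) ≤ 2 * (1 - b) * (1 + b)), key]
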